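/- arXiv:1309.2420 — 8 statements merged into one kernel-verified Lean document; each statement's English description precedes it below -/
import Mathlib

section
/- Let s : Fin 3 → Fin 3 → ℤ be a grid whose off-diagonal entries form the set X = {s 0 1, s 0 2, s 1 0, s 1 2, s 2 0, s 2 1} of six distinct integers. If a and b are nonzero integers such that {s 0 1 + a, s 0 2 - a, s 1 0 - a, s 1 2 + a, s 2 0 + a, s 2 1 - a} = X and {s 0 1 + b, s 0 2 - b, s 1 0 - b, s 1 2 + b, s 2 0 + b, s 2 1 - b} = X, then a and b have the same sign, i.e. a * b > 0. -/
lemma sum_sq6 (p1 p2 p3 p4 p5 p6 : ℤ)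
    (h : ({p1, p2, p3, p4, p5, p6} : Finset ℤ).card = 6) :
    ∑ x ∈ ({p1, p2, p3, p4, p5, p6} : Finset ℤ), x ^ 2
      = p1^2 + p2^2 + p3^2 + p4^2 + p5^2 + p6^2 := by
  have hf : ({p1, p2, p3, p4, p5, p6} : Finset ℤ) = [p1, p2, p3, p4, p5, p6].toFinset := by
    simp
  have hnd : ([p1, p2, p3, p4, p5, p6] : List ℤ).Nodup := by
    have := Multiset.toFinset_card_eq_card_iff_nodup
      (m := (([p1, p2, p3, p4, p5, p6] : List ℤ) : Multiset ℤ))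
    rw [hf] at h
    simp only [Multiset.coe_nodup] at this
    exact this.mp (by simpa using h)
  rw [hf, List.sum_toFinset _ hnd]
  simp [add_assoc]

lemma shift_eq (x1 x2 x3 x4 x5 x6 a : ℤ) (ha : a ≠ 0)
    (hdist : ({x1, x2, x3, x4, x5, x6} : Finset ℤ).card = 6)
    (hA : ({x1 + a, x2 - a, x3 - a, x4 + a, x5 + a, x6 - a} : Finset ℤ)
        = {x1, x2, x3, x4, x5, x6}) :
    x1 - x2 - x3 + x4 + x5 - x6 = -3 * a := by
  have hcardA : ({x1 + a, x2 - a, x3 - a, x4 + a, x5 + a, x6 - a} : Finset ℤ).card = 6 := by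
    rw [hA]; exact hdist
  have h1 := sum_sq6 _ _ _ _ _ _ hcardA
  have h2 := sum_sq6 _ _ _ _ _ _ hdist
  have hsum : ∑ x ∈ ({x1 + a, x2 - a, x3 - a, x4 + a, x5 + a, x6 - a} : Finset ℤ), x ^ 2
      = ∑ x ∈ ({x1, x2, x3, x4, x5, x6} : Finset ℤ), x ^ 2 := by rw [hA]
  rw [h1, h2] at hsum
  have key : a * (6 * a + 2 * (x1 - x2 - x3 + x4 + x5 - x6)) = 0 := by ring_nf; nlinarith [hsum]
  rcases mul_eq_zero.mp key with h | h
  · exact absurd h ha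
  · linarith

theorem fubuki_same_sign (s : Fin 3 → Fin 3 → ℤ)
    (hdist : ({s 0 1, s 0 2, s 1 0, s 1 2, s 2 0, s 2 1} : Finset ℤ).card = 6)
    (a b : ℤ) (ha : a ≠ 0) (hb : b ≠ 0)
    (hA : ({s 0 1 + a, s 0 2 - a, s 1 0 - a, s 1 2 + a, s 2 0 + a, s 2 1 - a} : Finset ℤ)
        = {s 0 1, s 0 2, s 1 0, s 1 2, s 2 0, s 2 1})
    (hB : ({s 0 1 + b, s 0 2 - b, s 1 0 - b, s 1 2 + b, s 2 0 + b, s 2 1 - b} : Finset ℤ)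
        = {s 0 1, s 0 2, s 1 0, s 1 2, s 2 0, s 2 1}) :
    a * b > 0 := by
  have hTa := shift_eq _ _ _ _ _ _ a ha hdist hA
  have hTb := shift_eq _ _ _ _ _ _ b hb hdist hB
  have hab : a = b := by linarith
  subst hab
  exact mul_self_pos.mpr ha
end

section
/- Let s : Fin 3 → Fin 3 → ℤ be a grid whose six off-diagonal entries are pairwise distinct, and let X be the set of these entries. Let a be a nonzero integer. If there is no three-element set T ⊆ X with T + {0, |a|} = X (Minkowski sum), then the perturbed grid S_a does not have its off-diagonal entries equal to X, i.e. {s 0 1 + a, s 0 2 - a, s 1 0 - a, s 1 2 + a, s 2 0 + a, s 2 1 - a} ≠ X. -/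
open Pointwise

set_option maxHeartbeats 1000000

lemma shift_key (c : ℤ) (hc : 0 < c) : ∀ n : ℕ, ∀ P M : Finset ℤ,
    (P ∪ M).card = n → Disjoint P M →
    Disjoint (P.image (· + c)) (M.image (· - c)) →
    P.image (· + c) ∪ M.image (· - c) = P ∪ M →
    P.image (· + c) = M := by
  intro n
  induction n using Nat.strong_induction_on with
  | _ n ih =>
    intro P M hcard hd1 hd2 hU
    rcases eq_or_ne (P ∪ M) ∅ with hE | hNE
    · have hP : P = ∅ := by
        have := Finset.union_eq_empty.mp hE
        exact this.1
      have hM : M = ∅ := (Finset.union_eq_empty.mp hE).2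
      simp [hP, hM]
    · have hne : (P ∪ M).Nonempty := Finset.nonempty_iff_ne_empty.mpr hNE
      set m := (P ∪ M).max' hne with hm
      have hmmem : m ∈ P ∪ M := Finset.max'_mem _ hne
      have hmax : ∀ x ∈ P ∪ M, x ≤ m := fun x hx => Finset.le_max' _ x hx
      -- m comes from P + c
      have hmimg : m ∈ P.image (· + c) := by
        have : m ∈ P.image (· + c) ∪ M.image (· - c) := hU ▸ hmmem
        rcases Finset.mem_union.mp this with h | h
        · exact h
        · exfalso
          obtain ⟨y, hy, hyc⟩ := Finset.mem_image.mp h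
          have hyX : y ∈ P ∪ M := Finset.mem_union_right _ hy
          have := hmax y hyX
          omega
      obtain ⟨p, hp, hpc⟩ := Finset.mem_image.mp hmimg
      have hpm : p = m - c := by omega
      -- m ∈ M
      have hmM : m ∈ M := by
        rcases Finset.mem_union.mp hmmem with h | h
        · exfalso
          have : m + c ∈ P.image (· + c) := Finset.mem_image_of_mem _ h
          have : m + c ∈ P ∪ M := hU ▸ Finset.mem_union_left _ this
          have := hmax _ this
          omega
        · exact h
      have hmnP : m ∉ P := fun h => (Finset.disjoint_left.mp hd1 h) hmM
      have hpnM : p ∉ M := fun h => (Finset.disjoint_left.mp hd1 hp) h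
      have hpimg : p ∈ M.image (· - c) := by
        refine Finset.mem_image.mpr ⟨m, hmM, by omega⟩
      have hmnimgM : m ∉ M.image (· - c) := fun h => (Finset.disjoint_left.mp hd2 hmimg) h
      have hpnimgP : p ∉ P.image (· + c) := fun h => (Finset.disjoint_left.mp hd2 h) hpimg
      have hpm' : p ≠ m := by omega
      set P' := P.erase p with hP'
      set M' := M.erase m with hM'
      have himgP' : P'.image (· + c) = (P.image (· + c)).erase m := by
        have := Finset.image_erase (f := (· + c)) (fun x y h => by simpa using h) P p
        rw [hP', this, hpc]
      have himgM' : M'.image (· - c) = (M.image (· - c)).erase p := by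
        have := Finset.image_erase (f := (· - c)) (fun x y h => by simpa using h) M m
        rw [hM', this, hpm]
      have hU' : P'.image (· + c) ∪ M'.image (· - c) = P' ∪ M' := by
        rw [himgP', himgM']
        ext x
        simp only [Finset.mem_union, Finset.mem_erase, hP', hM']
        constructor
        · rintro (⟨hx1, hx2⟩ | ⟨hx1, hx2⟩)
          · have hxX : x ∈ P ∪ M := hU ▸ Finset.mem_union_left _ hx2
            rcases Finset.mem_union.mp hxX with h | h
            · exact Or.inl ⟨fun he => (he ▸ hpnimgP) hx2, h⟩
            · exact Or.inr ⟨hx1, h⟩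
          · have hxX : x ∈ P ∪ M := hU ▸ Finset.mem_union_right _ hx2
            rcases Finset.mem_union.mp hxX with h | h
            · exact Or.inl ⟨hx1, h⟩
            · exact Or.inr ⟨fun he => (he ▸ hmnimgM) hx2, h⟩
        · rintro (⟨hx1, hx2⟩ | ⟨hx1, hx2⟩)
          · have hxX : x ∈ P.image (· + c) ∪ M.image (· - c) := by
              rw [hU]; exact Finset.mem_union_left _ hx2
            rcases Finset.mem_union.mp hxX with h | h
            · exact Or.inl ⟨fun he => (he ▸ hmnP) hx2, h⟩
            · exact Or.inr ⟨hx1, h⟩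
          · have hxX : x ∈ P.image (· + c) ∪ M.image (· - c) := by
              rw [hU]; exact Finset.mem_union_right _ hx2
            rcases Finset.mem_union.mp hxX with h | h
            · exact Or.inl ⟨hx1, h⟩
            · exact Or.inr ⟨fun he => (he ▸ hpnM) hx2, h⟩
      have hd1' : Disjoint P' M' := Finset.disjoint_of_subset_left (Finset.erase_subset _ _)
        (Finset.disjoint_of_subset_right (Finset.erase_subset _ _) hd1)
      have hd2' : Disjoint (P'.image (· + c)) (M'.image (· - c)) := by
        rw [himgP', himgM']
        exact Finset.disjoint_of_subset_left (Finset.erase_subset _ _)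
          (Finset.disjoint_of_subset_right (Finset.erase_subset _ _) hd2)
      have hPM' : P' ∪ M' = ((P ∪ M).erase p).erase m := by
        ext x
        simp only [Finset.mem_union, Finset.mem_erase, hP', hM']
        constructor
        · rintro (⟨h1, h2⟩ | ⟨h1, h2⟩)
          · exact ⟨fun he => (he ▸ hmnP) h2, h1, Or.inl h2⟩
          · exact ⟨h1, fun he => (he ▸ hpnM) h2, Or.inr h2⟩
        · rintro ⟨h1, h2, h3 | h3⟩
          · exact Or.inl ⟨h2, h3⟩
          · exact Or.inr ⟨h1, h3⟩
      have hcard' : (P' ∪ M').card < n := by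
        rw [hPM']
        have hpX : p ∈ P ∪ M := Finset.mem_union_left _ hp
        calc (((P ∪ M).erase p).erase m).card ≤ ((P ∪ M).erase p).card :=
              Finset.card_le_card (Finset.erase_subset _ _)
          _ < (P ∪ M).card := Finset.card_erase_lt_of_mem hpX
          _ = n := hcard
      have hIH := ih _ hcard' P' M' rfl hd1' hd2' hU'
      rw [himgP'] at hIH
      have : (P.image (· + c)).erase m = M.erase m := hIH
      have hfin : P.image (· + c) = M := by
        have h1 := Finset.insert_erase hmimg
        have h2 := Finset.insert_erase hmM
        rw [← h1, ← h2, this]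
      exact hfin

lemma card_le_three (p1 p2 p3 : ℤ) : ({p1, p2, p3} : Finset ℤ).card ≤ 3 := by
  calc ({p1,p2,p3} : Finset ℤ).card ≤ ({p2, p3} : Finset ℤ).card + 1 := Finset.card_insert_le _ _
    _ ≤ (({p3} : Finset ℤ).card + 1) + 1 := Nat.add_le_add_right (Finset.card_insert_le _ _) 1
    _ = 3 := by simp

lemma six_key (c p1 p2 p3 m1 m2 m3 : ℤ) (hc : 0 < c)
    (hcard : ({p1, p2, p3, m1, m2, m3} : Finset ℤ).card = 6)
    (heq : ({p1 + c, p2 + c, p3 + c, m1 - c, m2 - c, m3 - c} : Finset ℤ)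
        = {p1, p2, p3, m1, m2, m3}) :
    ∃ T : Finset ℤ, T.card = 3 ∧ T ⊆ ({p1, p2, p3, m1, m2, m3} : Finset ℤ) ∧
      T + ({0, c} : Finset ℤ) = {p1, p2, p3, m1, m2, m3} := by
  have hPM : ({p1, p2, p3} : Finset ℤ) ∪ {m1, m2, m3} = {p1, p2, p3, m1, m2, m3} := by
    ext x; simp only [Finset.mem_union, Finset.mem_insert, Finset.mem_singleton]
    tauto
  have hcP : ({p1, p2, p3} : Finset ℤ).card ≤ 3 := card_le_three _ _ _
  have hcM : ({m1, m2, m3} : Finset ℤ).card ≤ 3 := card_le_three _ _ _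
  have hle : ({p1, p2, p3, m1, m2, m3} : Finset ℤ).card
      ≤ ({p1, p2, p3} : Finset ℤ).card + ({m1, m2, m3} : Finset ℤ).card :=
    hPM ▸ Finset.card_union_le _ _
  have hcP3 : ({p1, p2, p3} : Finset ℤ).card = 3 := by omega
  have hcM3 : ({m1, m2, m3} : Finset ℤ).card = 3 := by omega
  have hdisj : Disjoint ({p1, p2, p3} : Finset ℤ) ({m1, m2, m3} : Finset ℤ) := by
    have h := Finset.card_union_add_card_inter ({p1, p2, p3} : Finset ℤ) {m1, m2, m3}
    rw [hPM, hcard, hcP3, hcM3] at h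
    rw [Finset.disjoint_iff_inter_eq_empty]
    exact Finset.card_eq_zero.mp (by omega)
  have hinjp : Function.Injective (· + c) := fun x y h => by simpa using h
  have hinjm : Function.Injective (· - c) := fun x y h => by simpa using h
  have himgP : ({p1, p2, p3} : Finset ℤ).image (· + c) = {p1 + c, p2 + c, p3 + c} := by
    simp [Finset.image_insert]
  have himgM : ({m1, m2, m3} : Finset ℤ).image (· - c) = {m1 - c, m2 - c, m3 - c} := by
    simp [Finset.image_insert]
  have hUimg : ({p1, p2, p3} : Finset ℤ).image (· + c) ∪ ({m1, m2, m3} : Finset ℤ).image (· - c)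
      = {p1, p2, p3, m1, m2, m3} := by
    rw [himgP, himgM, ← heq]
    ext x; simp only [Finset.mem_union, Finset.mem_insert, Finset.mem_singleton]
    tauto
  have hdisj2 : Disjoint (({p1, p2, p3} : Finset ℤ).image (· + c))
      (({m1, m2, m3} : Finset ℤ).image (· - c)) := by
    have h := Finset.card_union_add_card_inter (({p1, p2, p3} : Finset ℤ).image (· + c))
      (({m1, m2, m3} : Finset ℤ).image (· - c))
    rw [hUimg, hcard, Finset.card_image_of_injective _ hinjp,
      Finset.card_image_of_injective _ hinjm, hcP3, hcM3] at h
    rw [Finset.disjoint_iff_inter_eq_empty]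
    exact Finset.card_eq_zero.mp (by omega)
  have hkey := shift_key c hc _ ({p1, p2, p3} : Finset ℤ) {m1, m2, m3} rfl hdisj hdisj2
    (hUimg.trans hPM.symm)
  refine ⟨{p1, p2, p3}, hcP3, ?_, ?_⟩
  · rw [← hPM]; exact Finset.subset_union_left
  · ext x
    simp only [Finset.mem_add, Finset.mem_insert, Finset.mem_singleton]
    constructor
    · rintro ⟨y, hy, z, hz, rfl⟩
      have hy' : y ∈ ({p1, p2, p3} : Finset ℤ) := by
        simp only [Finset.mem_insert, Finset.mem_singleton]; tauto
      rcases hz with rfl | hzc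
      · have : y + 0 ∈ ({p1, p2, p3, m1, m2, m3} : Finset ℤ) := by
          rw [← hPM]
          simpa using Finset.mem_union_left ({m1, m2, m3} : Finset ℤ) hy'
        simpa using this
      · rw [hzc]
        have h2 : y + c ∈ ({m1, m2, m3} : Finset ℤ) := by
          rw [← hkey]; exact Finset.mem_image_of_mem _ hy'
        have : y + c ∈ ({p1, p2, p3, m1, m2, m3} : Finset ℤ) := by
          rw [← hPM]; exact Finset.mem_union_right _ h2
        simpa using this
    · intro hx
      have hx' : x ∈ ({p1, p2, p3} : Finset ℤ) ∪ {m1, m2, m3} := by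
        rw [hPM]; simp only [Finset.mem_insert, Finset.mem_singleton]; tauto
      rcases Finset.mem_union.mp hx' with h | h
      · have := Finset.mem_insert.mp h
        refine ⟨x, ?_, 0, Or.inl rfl, by ring⟩
        simpa using h
      · rw [← hkey] at h
        obtain ⟨y, hy, rfl⟩ := Finset.mem_image.mp h
        exact ⟨y, by simpa using hy, c, Or.inr rfl, rfl⟩

theorem fubuki_no_triplet_no_solution (s : Fin 3 → Fin 3 → ℤ)
    (hdist : ({s 0 1, s 0 2, s 1 0, s 1 2, s 2 0, s 2 1} : Finset ℤ).card = 6)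
    (a : ℤ) (ha : a ≠ 0)
    (hno : ¬ ∃ T : Finset ℤ, T.card = 3 ∧
        T ⊆ ({s 0 1, s 0 2, s 1 0, s 1 2, s 2 0, s 2 1} : Finset ℤ) ∧
        T + ({0, |a|} : Finset ℤ) = {s 0 1, s 0 2, s 1 0, s 1 2, s 2 0, s 2 1}) :
    ({s 0 1 + a, s 0 2 - a, s 1 0 - a, s 1 2 + a, s 2 0 + a, s 2 1 - a} : Finset ℤ)
      ≠ {s 0 1, s 0 2, s 1 0, s 1 2, s 2 0, s 2 1} := by
  intro heq
  rcases lt_or_gt_of_ne ha with hneg | hpos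
  · -- a < 0, use c = -a
    have habs : |a| = -a := abs_of_neg hneg
    have h2 : ({s 0 2, s 1 0, s 2 1, s 0 1, s 1 2, s 2 0} : Finset ℤ)
        = {s 0 1, s 0 2, s 1 0, s 1 2, s 2 0, s 2 1} := by
      ext x; simp only [Finset.mem_insert, Finset.mem_singleton]; tauto
    have hcard' : ({s 0 2, s 1 0, s 2 1, s 0 1, s 1 2, s 2 0} : Finset ℤ).card = 6 := by
      rw [h2]; exact hdist
    have heq' : ({s 0 2 + -a, s 1 0 + -a, s 2 1 + -a, s 0 1 - -a, s 1 2 - -a, s 2 0 - -a} :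
        Finset ℤ) = {s 0 2, s 1 0, s 2 1, s 0 1, s 1 2, s 2 0} := by
      have h1 : ({s 0 2 + -a, s 1 0 + -a, s 2 1 + -a, s 0 1 - -a, s 1 2 - -a, s 2 0 - -a} :
          Finset ℤ) = {s 0 1 + a, s 0 2 - a, s 1 0 - a, s 1 2 + a, s 2 0 + a, s 2 1 - a} := by
        simp only [sub_neg_eq_add, ← sub_eq_add_neg]
        ext x; simp only [Finset.mem_insert, Finset.mem_singleton]; tauto
      rw [h1, heq, ← h2]
    obtain ⟨T, hT1, hT2, hT3⟩ := six_key (-a) (s 0 2) (s 1 0) (s 2 1) (s 0 1) (s 1 2) (s 2 0)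
      (by omega) hcard' heq'
    rw [h2] at hT2 hT3
    exact hno ⟨T, hT1, hT2, by rw [habs]; exact hT3⟩
  · -- a > 0
    have habs : |a| = a := abs_of_pos hpos
    have h2 : ({s 0 1, s 1 2, s 2 0, s 0 2, s 1 0, s 2 1} : Finset ℤ)
        = {s 0 1, s 0 2, s 1 0, s 1 2, s 2 0, s 2 1} := by
      ext x; simp only [Finset.mem_insert, Finset.mem_singleton]; tauto
    have hcard' : ({s 0 1, s 1 2, s 2 0, s 0 2, s 1 0, s 2 1} : Finset ℤ).card = 6 := by
      rw [h2]; exact hdist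
    have heq' : ({s 0 1 + a, s 1 2 + a, s 2 0 + a, s 0 2 - a, s 1 0 - a, s 2 1 - a} :
        Finset ℤ) = {s 0 1, s 1 2, s 2 0, s 0 2, s 1 0, s 2 1} := by
      have h1 : ({s 0 1 + a, s 1 2 + a, s 2 0 + a, s 0 2 - a, s 1 0 - a, s 2 1 - a} :
          Finset ℤ) = {s 0 1 + a, s 0 2 - a, s 1 0 - a, s 1 2 + a, s 2 0 + a, s 2 1 - a} := by
        ext x; simp only [Finset.mem_insert, Finset.mem_singleton]; tauto
      rw [h1, heq, ← h2]
    obtain ⟨T, hT1, hT2, hT3⟩ := six_key a (s 0 1) (s 1 2) (s 2 0) (s 0 2) (s 1 0) (s 2 1)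
      hpos hcard' heq'
    rw [h2] at hT2 hT3
    exact hno ⟨T, hT1, hT2, by rw [habs]; exact hT3⟩
end

section
/- Let s : Fin 3 → Fin 3 → ℤ be a grid whose six off-diagonal entries are pairwise distinct, forming the set X, and let a > 0. Suppose T ⊆ X is a three-element set with T + {0,a} = X. Then {s 0 1 + a, s 0 2 - a, s 1 0 - a, s 1 2 + a, s 2 0 + a, s 2 1 - a} = X if and only if T = {s 0 1, s 1 2, s 2 0}. -/
open Pointwise

lemma fubuki_key (a : ℤ) (ha : 0 < a) (g h : ℤ → ℤ) (X : Finset ℤ)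
    (hg1 : ∀ x ∈ X, g x = a ∨ g x = -a)
    (hh1 : ∀ x ∈ X, h x = a ∨ h x = -a)
    (hg2 : X.image (fun x => x + g x) = X)
    (hh2 : X.image (fun x => x + h x) = X) :
    ∀ x ∈ X, g x = h x := by
  induction X using Finset.strongInduction with
  | _ X ih =>
    intro x hx
    have hXne : X.Nonempty := ⟨x, hx⟩
    set m := X.max' hXne with hm
    have hmX : m ∈ X := X.max'_mem hXne
    -- generic facts for a sign function f
    have claim : ∀ f : ℤ → ℤ, (∀ y ∈ X, f y = a ∨ f y = -a) →
        X.image (fun y => y + f y) = X →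
        f m = -a ∧ (m - a ∈ X ∧ f (m - a) = a) := by
      intro f hf1 hf2
      have hfm : f m = -a := by
        rcases hf1 m hmX with h1 | h1
        · exfalso
          have hmem : m + f m ∈ X := by
            rw [← hf2]; exact Finset.mem_image_of_mem _ hmX
          have := X.le_max' _ hmem
          rw [← hm] at this
          omega
        · exact h1
      refine ⟨hfm, ?_⟩
      have : m ∈ X.image (fun y => y + f y) := by rw [hf2]; exact hmX
      rcases Finset.mem_image.mp this with ⟨y, hy, hye⟩
      rcases hf1 y hy with h1 | h1
      · have : y = m - a := by omega
        exact ⟨this ▸ hy, this ▸ h1⟩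
      · exfalso
        have := X.le_max' _ hy
        rw [← hm] at this
        omega
    obtain ⟨hgm, hma, hgma⟩ := claim g hg1 hg2
    obtain ⟨hhm, -, hhma⟩ := claim h hh1 hh2
    -- injectivity
    have hinj : ∀ f : ℤ → ℤ, X.image (fun y => y + f y) = X →
        Set.InjOn (fun y => y + f y) X := by
      intro f hf2
      exact Finset.card_image_iff.mp (by rw [hf2])
    set X' := (X.erase m).erase (m - a) with hX'
    have hX'sub : X' ⊆ X := fun y hy =>
      Finset.mem_of_mem_erase (Finset.mem_of_mem_erase hy)
    have hX'mem : ∀ y, y ∈ X' ↔ y ∈ X ∧ y ≠ m ∧ y ≠ m - a := by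
      intro y
      simp only [hX', Finset.mem_erase]
      tauto
    -- restricted images
    have claim2 : ∀ f : ℤ → ℤ, (∀ y ∈ X, f y = a ∨ f y = -a) →
        X.image (fun y => y + f y) = X → f m = -a → f (m - a) = a →
        X'.image (fun y => y + f y) = X' := by
      intro f hf1 hf2 hfm hfma
      have hi := hinj f hf2
      have hsub : X'.image (fun y => y + f y) ⊆ X' := by
        intro y hy
        rcases Finset.mem_image.mp hy with ⟨z, hz, hze⟩
        have hzX : z ∈ X := hX'sub hz
        rcases (hX'mem z).mp hz with ⟨-, hzm, hzma⟩
        rw [hX'mem]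
        refine ⟨by rw [← hf2]; exact hze ▸ Finset.mem_image_of_mem _ hzX, ?_, ?_⟩
        · intro hcon
          have : z + f z = (m - a) + f (m - a) := by rw [hze, hcon, hfma]; ring
          exact hzma (hi hzX hma this)
        · intro hcon
          have : z + f z = m + f m := by rw [hze, hcon, hfm]; ring
          exact hzm (hi hzX hmX this)
      have hcard : (X'.image (fun y => y + f y)).card = X'.card :=
        Finset.card_image_of_injOn (hi.mono (by exact_mod_cast hX'sub))
      exact Finset.eq_of_subset_of_card_le hsub (le_of_eq hcard.symm)
    have hss : X' ⊂ X :=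
      Finset.ssubset_of_subset_of_ssubset (Finset.erase_subset _ _)
        (Finset.erase_ssubset hmX)
    have geq : ∀ y ∈ X', g y = h y :=
      ih X' hss (fun y hy => hg1 y (hX'sub hy)) (fun y hy => hh1 y (hX'sub hy))
        (claim2 g hg1 hg2 hgm hgma) (claim2 h hh1 hh2 hhm hhma)
    by_cases h1 : x = m
    · rw [h1, hgm, hhm]
    by_cases h2 : x = m - a
    · rw [h2, hgma, hhma]
    · exact geq x ((hX'mem x).mpr ⟨hx, h1, h2⟩)


lemma fubuki_aux (x1 x2 x3 x4 x5 x6 : ℤ)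
    (hdist : ({x1, x2, x3, x4, x5, x6} : Finset ℤ).card = 6)
    (a : ℤ) (ha : 0 < a)
    (T : Finset ℤ) (hTcard : T.card = 3)
    (hTX : T ⊆ ({x1, x2, x3, x4, x5, x6} : Finset ℤ))
    (hT : T + ({0, a} : Finset ℤ) = {x1, x2, x3, x4, x5, x6}) :
    ({x1 + a, x2 - a, x3 - a, x4 + a, x5 + a, x6 - a} : Finset ℤ)
        = {x1, x2, x3, x4, x5, x6}
      ↔ T = {x1, x4, x5} := by
  classical
  set X : Finset ℤ := {x1, x2, x3, x4, x5, x6} with hX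
  -- pairwise distinctness
  have hnodup : ([x1, x2, x3, x4, x5, x6] : List ℤ).Nodup := by
    rw [← Multiset.coe_nodup, ← Multiset.toFinset_card_eq_card_iff_nodup]
    simpa using hdist
  simp only [List.nodup_cons, List.mem_cons, List.mem_singleton,
    List.not_mem_nil, or_false, not_or, List.nodup_nil, and_true] at hnodup
  obtain ⟨⟨d12, d13, d14, d15, d16⟩, ⟨d23, d24, d25, d26⟩, ⟨d34, d35, d36⟩,
    ⟨d45, d46⟩, d56, -⟩ := hnodup
  have d21 : x2 ≠ x1 := Ne.symm d12
  have d41 : x4 ≠ x1 := Ne.symm d14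
  have d51 : x5 ≠ x1 := Ne.symm d15
  have d31 : x3 ≠ x1 := Ne.symm d13
  have d42 : x4 ≠ x2 := Ne.symm d24
  have d52 : x5 ≠ x2 := Ne.symm d25
  have d43 : x4 ≠ x3 := Ne.symm d34
  have d53 : x5 ≠ x3 := Ne.symm d35
  have d54 : x5 ≠ x4 := Ne.symm d45
  have d61 : x6 ≠ x1 := Ne.symm d16
  have d64 : x6 ≠ x4 := Ne.symm d46
  have d65 : x6 ≠ x5 := Ne.symm d56
  set g : ℤ → ℤ := fun x => if x = x1 ∨ x = x4 ∨ x = x5 then a else -a with hgdef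
  set h : ℤ → ℤ := fun x => if x ∈ T then a else -a with hhdef
  have hg1 : ∀ x ∈ X, g x = a ∨ g x = -a := by
    intro x _; by_cases hc : x = x1 ∨ x = x4 ∨ x = x5
    · left; simp [hgdef, hc]
    · right; simp [hgdef, hc]
  have hh1 : ∀ x ∈ X, h x = a ∨ h x = -a := by
    intro x _; by_cases hc : x ∈ T
    · left; simp [hhdef, hc]
    · right; simp [hhdef, hc]
  have himg_g : X.image (fun x => x + g x)
      = {x1 + a, x2 - a, x3 - a, x4 + a, x5 + a, x6 - a} := by
    simp [hX, hgdef, d21, d24, d25, d31, d34, d35, d61, d64, d65,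
      Finset.image_insert, sub_eq_add_neg]
  -- split Minkowski sum
  have hsplit : T + ({0, a} : Finset ℤ) = T ∪ T.image (· + a) := by
    ext y
    simp only [Finset.mem_add, Finset.mem_union, Finset.mem_image,
      Finset.mem_insert, Finset.mem_singleton]
    constructor
    · rintro ⟨b, hb, c, hc, rfl⟩
      rcases hc with rfl | rfl
      · left; simpa using hb
      · right; exact ⟨b, hb, rfl⟩
    · rintro (hy | ⟨b, hb, rfl⟩)
      exacts [⟨y, hy, 0, Or.inl rfl, add_zero y⟩, ⟨b, hb, a, Or.inr rfl, rfl⟩]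
  have himgcard : (T.image (· + a)).card = 3 := by
    rw [Finset.card_image_of_injective _ (add_left_injective a), hTcard]
  have hdisj : Disjoint T (T.image (· + a)) := by
    rw [← Finset.card_union_eq_card_add_card, ← hsplit, hT, hdist, hTcard, himgcard]
  have hTa : ∀ t ∈ T, t + a ∈ X := fun t ht => by
    have := Finset.add_mem_add ht (show a ∈ ({0, a} : Finset ℤ) by simp)
    rwa [hT] at this
  have hTrep : ∀ y ∈ X, y ∉ T → ∃ t ∈ T, t + a = y := by
    intro y hy hyT
    rw [← hT] at hy
    rcases Finset.mem_add.mp hy with ⟨b, hb, c, hc, he⟩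
    rcases Finset.mem_insert.mp hc with rfl | hc
    · exfalso; apply hyT; rw [← he, add_zero]; exact hb
    · rw [Finset.mem_singleton] at hc
      exact ⟨b, hb, by rw [← hc]; exact he⟩
  have hinjh : Set.InjOn (fun x => x + h x) X := by
    intro y hy z hz he
    simp only [hhdef] at he
    by_cases hyT : y ∈ T <;> by_cases hzT : z ∈ T
    · simp only [if_pos hyT, if_pos hzT] at he; omega
    · exfalso
      simp only [if_pos hyT, if_neg hzT] at he
      obtain ⟨t, ht, hte⟩ := hTrep z hz hzT
      have : t = y + a := by omega
      exact Finset.disjoint_left.mp hdisj (this ▸ ht)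
        (Finset.mem_image.mpr ⟨y, hyT, rfl⟩)
    · exfalso
      simp only [if_neg hyT, if_pos hzT] at he
      obtain ⟨t, ht, hte⟩ := hTrep y hy hyT
      have : t = z + a := by omega
      exact Finset.disjoint_left.mp hdisj (this ▸ ht)
        (Finset.mem_image.mpr ⟨z, hzT, rfl⟩)
    · simp only [if_neg hyT, if_neg hzT] at he; omega
  have hh2 : X.image (fun x => x + h x) = X := by
    have hsub : X.image (fun x => x + h x) ⊆ X := by
      intro y hy
      rcases Finset.mem_image.mp hy with ⟨z, hz, hze⟩
      by_cases hzT : z ∈ T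
      · have : z + h z = z + a := by simp [hhdef, hzT]
        rw [← hze, this]; exact hTa z hzT
      · obtain ⟨t, ht, hte⟩ := hTrep z hz hzT
        have : z + h z = t := by simp [hhdef, hzT]; omega
        rw [← hze, this]; exact hTX ht
    exact Finset.eq_of_subset_of_card_le hsub
      (le_of_eq (Finset.card_image_of_injOn hinjh).symm)
  have hmemX : x1 ∈ X ∧ x4 ∈ X ∧ x5 ∈ X := by simp [hX]
  constructor
  · intro hLHS
    have hg2 : X.image (fun x => x + g x) = X := himg_g.trans hLHS
    have hgh := fubuki_key a ha g h X hg1 hh1 hg2 hh2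
    ext y
    simp only [Finset.mem_insert, Finset.mem_singleton]
    constructor
    · intro hyT
      have hyX : y ∈ X := hTX hyT
      have hgy := hgh y hyX
      have hhy : h y = a := by simp [hhdef, hyT]
      rw [hhy] at hgy
      by_contra hcon
      have : g y = -a := by
        simp only [hgdef]; rw [if_neg]; tauto
      omega
    · intro hyP
      have hyX : y ∈ X := by
        rcases hyP with rfl | rfl | rfl
        exacts [hmemX.1, hmemX.2.1, hmemX.2.2]
      have hgy := hgh y hyX
      have : g y = a := by simp only [hgdef]; rw [if_pos]; tauto
      rw [this] at hgy
      by_contra hcon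
      have : h y = -a := by simp [hhdef, hcon]
      omega
  · intro hTP
    have hgh : ∀ x ∈ X, g x = h x := by
      intro y hy
      rw [hX] at hy
      simp only [Finset.mem_insert, Finset.mem_singleton] at hy
      have hmem : y ∈ T ↔ (y = x1 ∨ y = x4 ∨ y = x5) := by
        rw [hTP]; simp
      rcases hy with rfl | rfl | rfl | rfl | rfl | rfl <;>
        simp [hgdef, hhdef, hmem, d21, d24, d25, d31, d34, d35, d61, d64, d65]
    rw [← himg_g,
      Finset.image_congr (fun x hx => by
        show x + g x = x + h x
        rw [hgh x (by exact_mod_cast hx)]),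
      hh2]

theorem fubuki_solution_iff_triplet (s : Fin 3 → Fin 3 → ℤ)
    (hdist : ({s 0 1, s 0 2, s 1 0, s 1 2, s 2 0, s 2 1} : Finset ℤ).card = 6)
    (a : ℤ) (ha : 0 < a)
    (T : Finset ℤ) (hTcard : T.card = 3)
    (hTX : T ⊆ ({s 0 1, s 0 2, s 1 0, s 1 2, s 2 0, s 2 1} : Finset ℤ))
    (hT : T + ({0, a} : Finset ℤ) = {s 0 1, s 0 2, s 1 0, s 1 2, s 2 0, s 2 1}) :
    ({s 0 1 + a, s 0 2 - a, s 1 0 - a, s 1 2 + a, s 2 0 + a, s 2 1 - a} : Finset ℤ)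
        = {s 0 1, s 0 2, s 1 0, s 1 2, s 2 0, s 2 1}
      ↔ T = {s 0 1, s 1 2, s 2 0} := by
  exact fubuki_aux (s 0 1) (s 0 2) (s 1 0) (s 1 2) (s 2 0) (s 2 1)
    hdist a ha T hTcard hTX hT
end

section
/- Let D = {d₁, d₂, d₃} ⊆ {1,…,9} be a three-element set such that no positive integer c and integers y₁, y₂, y₃ satisfy {y₁, y₁+c, y₂, y₂+c, y₃, y₃+c} = {1,…,9} \ D. Then for any row sums r : Fin 3 → ℤ and column sums k : Fin 3 → ℤ, there is at most one grid s : Fin 3 → Fin 3 → ℤ that (i) is a bijection onto {1,…,9} when viewed as a function of its 9 entries, (ii) has diagonal entries s 0 0 = d₁, s 1 1 = d₂, s 2 2 = d₃, (iii) has row sums r and column sums k. -/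
/-- The nine entries of the grid form a permutation of `{1,…,9}`. -/
def IsFubukiFilling (s : Fin 3 → Fin 3 → ℤ) : Prop :=
  (Finset.univ.image fun p : Fin 3 × Fin 3 => s p.1 p.2) = Finset.Icc (1 : ℤ) 9

lemma fubuki_entries {s : Fin 3 → Fin 3 → ℤ} (h : IsFubukiFilling s) :
    ({s 0 0, s 0 1, s 0 2, s 1 0, s 1 1, s 1 2, s 2 0, s 2 1, s 2 2} : Finset ℤ)
      = Finset.Icc 1 9 := by
  rw [IsFubukiFilling] at h
  rw [show (Finset.univ : Finset (Fin 3 × Fin 3)) =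
      {(0,0),(0,1),(0,2),(1,0),(1,1),(1,2),(2,0),(2,1),(2,2)} from by decide] at h
  simpa using h

lemma nodup_of_card9 {a1 a2 a3 a4 a5 a6 a7 a8 a9 : ℤ}
    (h : ({a1,a2,a3,a4,a5,a6,a7,a8,a9} : Finset ℤ).card = 9) :
    ([a1,a2,a3,a4,a5,a6,a7,a8,a9] : List ℤ).Nodup := by
  have ht : ([a1,a2,a3,a4,a5,a6,a7,a8,a9] : List ℤ).toFinset = {a1,a2,a3,a4,a5,a6,a7,a8,a9} := by
    simp
  rw [← Multiset.coe_nodup, ← Multiset.toFinset_card_eq_card_iff_nodup]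
  show (List.toFinset _).card = _
  rw [ht, h]
  rfl

set_option maxHeartbeats 1000000 in
lemma fubuki_key_s11 (d₁ d₂ d₃ x1 x2 x3 x4 x5 x6 a : ℤ) (ha : 0 < a)
    (h1 : ({d₁, x1, x2, x3, d₂, x4, x5, x6, d₃} : Finset ℤ) = Finset.Icc 1 9)
    (h2 : ({d₁, x1 - a, x2 + a, x3 + a, d₂, x4 - a, x5 - a, x6 + a, d₃} : Finset ℤ)
        = Finset.Icc 1 9) :
    ∃ (c y₁ y₂ y₃ : ℤ), 0 < c ∧
      ({y₁, y₁ + c, y₂, y₂ + c, y₃, y₃ + c} : Finset ℤ)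
        = Finset.Icc (1 : ℤ) 9 \ {d₁, d₂, d₃} := by
  have hc1 : ({d₁, x1, x2, x3, d₂, x4, x5, x6, d₃} : Finset ℤ).card = 9 := by
    rw [h1, Int.card_Icc]; rfl
  have hc2 : ({d₁, x1 - a, x2 + a, x3 + a, d₂, x4 - a, x5 - a, x6 + a, d₃} : Finset ℤ).card = 9 := by
    rw [h2, Int.card_Icc]; rfl
  have hnd1 := nodup_of_card9 hc1
  have hnd2 := nodup_of_card9 hc2
  simp only [List.nodup_cons, List.mem_cons, List.mem_singleton, List.not_mem_nil,
    or_false, not_or, List.nodup_nil, and_true] at hnd1 hnd2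
  obtain ⟨⟨nA1,nA2,nA3,nA4,nA5,nA6,nA7,nA8⟩,⟨nB1,nB2,nB3,nB4,nB5,nB6,nB7⟩,
    ⟨nC1,nC2,nC3,nC4,nC5,nC6⟩,⟨nD1,nD2,nD3,nD4,nD5⟩,⟨nE1,nE2,nE3,nE4⟩,
    ⟨nF1,nF2,nF3⟩,⟨nG1,nG2⟩,nH1,-⟩ := hnd1
  obtain ⟨⟨mA1,mA2,mA3,mA4,mA5,mA6,mA7,mA8⟩,⟨mB1,mB2,mB3,mB4,mB5,mB6,mB7⟩,
    ⟨mC1,mC2,mC3,mC4,mC5,mC6⟩,⟨mD1,mD2,mD3,mD4,mD5⟩,⟨mE1,mE2,mE3,mE4⟩,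
    ⟨mF1,mF2,mF3⟩,⟨mG1,mG2⟩,mH1,-⟩ := hnd2
  -- membership closure lemmas
  have mem1 : ∀ z : ℤ, z ∈ Finset.Icc (1:ℤ) 9 →
      z = d₁ ∨ z = x1 ∨ z = x2 ∨ z = x3 ∨ z = d₂ ∨ z = x4 ∨ z = x5 ∨ z = x6 ∨ z = d₃ := by
    intro z hz; rw [← h1] at hz; simpa using hz
  have mem2 : ∀ z : ℤ, z ∈ Finset.Icc (1:ℤ) 9 →
      z = d₁ ∨ z = x1 - a ∨ z = x2 + a ∨ z = x3 + a ∨ z = d₂ ∨ z = x4 - a ∨ z = x5 - a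
        ∨ z = x6 + a ∨ z = d₃ := by
    intro z hz; rw [← h2] at hz; simpa using hz
  have in1 : ∀ z : ℤ,
      (z = d₁ ∨ z = x1 ∨ z = x2 ∨ z = x3 ∨ z = d₂ ∨ z = x4 ∨ z = x5 ∨ z = x6 ∨ z = d₃) →
      z ∈ Finset.Icc (1:ℤ) 9 := by
    intro z hz; rw [← h1]; simpa using hz
  have in2 : ∀ z : ℤ,
      (z = d₁ ∨ z = x1 - a ∨ z = x2 + a ∨ z = x3 + a ∨ z = d₂ ∨ z = x4 - a ∨ z = x5 - a
        ∨ z = x6 + a ∨ z = d₃) → z ∈ Finset.Icc (1:ℤ) 9 := by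
    intro z hz; rw [← h2]; simpa using hz
  -- descent step
  have step : ∀ t : ℤ, (t = x2 ∨ t = x3 ∨ t = x6) →
      ¬(t = x1 - a ∨ t = x4 - a ∨ t = x5 - a) →
      ((t - a = x2 ∨ t - a = x3 ∨ t - a = x6) ∧
        ¬(t - a = x1 - a ∨ t - a = x4 - a ∨ t - a = x5 - a)) := by
    intro t htA htB
    have hticc : t ∈ Finset.Icc (1:ℤ) 9 := in1 t (by
      rcases htA with h|h|h
      · exact Or.inr (Or.inr (Or.inl h))
      · exact Or.inr (Or.inr (Or.inr (Or.inl h)))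
      · exact Or.inr (Or.inr (Or.inr (Or.inr (Or.inr (Or.inr (Or.inr (Or.inl h))))))))
    have h9 := mem2 t hticc
    have h6 : t = x2 + a ∨ t = x3 + a ∨ t = x6 + a := by
      rcases h9 with h|h|h|h|h|h|h|h|h
      · exfalso
        rcases htA with h'|h'|h'
        · exact Ne.symm nA2 (h'.symm.trans h)
        · exact Ne.symm nA3 (h'.symm.trans h)
        · exact Ne.symm nA7 (h'.symm.trans h)
      · exact absurd (Or.inl h) htB
      · exact Or.inl h
      · exact Or.inr (Or.inl h)
      · exfalso
        rcases htA with h'|h'|h'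
        · exact nC2 (h'.symm.trans h)
        · exact nD1 (h'.symm.trans h)
        · exact Ne.symm nE3 (h'.symm.trans h)
      · exact absurd (Or.inr (Or.inl h)) htB
      · exact absurd (Or.inr (Or.inr h)) htB
      · exact Or.inr (Or.inr h)
      · exfalso
        rcases htA with h'|h'|h'
        · exact nC6 (h'.symm.trans h)
        · exact nD5 (h'.symm.trans h)
        · exact nH1 (h'.symm.trans h)
    constructor
    · rcases h6 with h|h|h
      · exact Or.inl (by linarith)
      · exact Or.inr (Or.inl (by linarith))
      · exact Or.inr (Or.inr (by linarith))
    · rintro (h|h|h) <;> rcases htA with h'|h'|h'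
      · exact nB1 (by linarith)
      · exact nB2 (by linarith)
      · exact nB6 (by linarith)
      · exact nC3 (by linarith)
      · exact nD2 (by linarith)
      · exact Ne.symm nF2 (by linarith)
      · exact nC4 (by linarith)
      · exact nD3 (by linarith)
      · exact Ne.symm nG1 (by linarith)
  -- A ⊆ B'
  have AsubB : ∀ t : ℤ, (t = x2 ∨ t = x3 ∨ t = x6) →
      (t = x1 - a ∨ t = x4 - a ∨ t = x5 - a) := by
    intro t ht
    by_contra hcon
    obtain ⟨h1', hc1'⟩ := step t ht hcon
    obtain ⟨h2', hc2'⟩ := step _ h1' hc1'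
    obtain ⟨h3', _⟩ := step _ h2' hc2'
    rcases ht with h|h|h <;> rcases h1' with h'|h'|h' <;> rcases h2' with h''|h''|h'' <;>
      rcases h3' with h'''|h'''|h''' <;> linarith
  -- upgrade to finset equality / reverse inclusion
  have hsub : ({x2, x3, x6} : Finset ℤ) ⊆ {x1 - a, x4 - a, x5 - a} := by
    intro z hz
    simp only [Finset.mem_insert, Finset.mem_singleton] at hz ⊢
    exact AsubB z hz
  have hcardA : ({x2, x3, x6} : Finset ℤ).card = 3 := by
    rw [Finset.card_eq_three]
    exact ⟨x2, x3, x6, nC1, nC5, nD4, rfl⟩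
  have hcardB : ({x1 - a, x4 - a, x5 - a} : Finset ℤ).card ≤ 3 := by
    apply (Finset.card_insert_le _ _).trans
    exact Nat.add_le_add_right
      (by simpa using Finset.card_insert_le (x4 - a) ({x5 - a} : Finset ℤ)) 1
  have heq : ({x2, x3, x6} : Finset ℤ) = {x1 - a, x4 - a, x5 - a} :=
    Finset.eq_of_subset_of_card_le hsub (by rw [hcardA]; exact hcardB)
  have BsubA : ∀ t : ℤ, (t = x1 - a ∨ t = x4 - a ∨ t = x5 - a) →
      (t = x2 ∨ t = x3 ∨ t = x6) := by
    intro t ht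
    have : t ∈ ({x1 - a, x4 - a, x5 - a} : Finset ℤ) := by
      simp only [Finset.mem_insert, Finset.mem_singleton]; exact ht
    rw [← heq] at this
    simpa using this
  -- final construction
  have i2 : x2 ∈ Finset.Icc (1:ℤ) 9 := in1 x2 (Or.inr (Or.inr (Or.inl rfl)))
  have i3 : x3 ∈ Finset.Icc (1:ℤ) 9 := in1 x3 (Or.inr (Or.inr (Or.inr (Or.inl rfl))))
  have i6 : x6 ∈ Finset.Icc (1:ℤ) 9 :=
    in1 x6 (Or.inr (Or.inr (Or.inr (Or.inr (Or.inr (Or.inr (Or.inr (Or.inl rfl))))))))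
  have j2 : x2 + a ∈ Finset.Icc (1:ℤ) 9 := in2 (x2 + a) (Or.inr (Or.inr (Or.inl rfl)))
  have j3 : x3 + a ∈ Finset.Icc (1:ℤ) 9 := in2 (x3 + a) (Or.inr (Or.inr (Or.inr (Or.inl rfl))))
  have j6 : x6 + a ∈ Finset.Icc (1:ℤ) 9 :=
    in2 (x6 + a) (Or.inr (Or.inr (Or.inr (Or.inr (Or.inr (Or.inr (Or.inr (Or.inl rfl))))))))
  refine ⟨a, x2, x3, x6, ha, ?_⟩
  ext z
  simp only [Finset.mem_insert, Finset.mem_singleton, Finset.mem_sdiff, not_or]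
  constructor
  · rintro (h|h|h|h|h|h) <;> subst h
    · exact ⟨i2, Ne.symm nA2, nC2, nC6⟩
    · exact ⟨j2, Ne.symm mA2, mC2, mC6⟩
    · exact ⟨i3, Ne.symm nA3, nD1, nD5⟩
    · exact ⟨j3, Ne.symm mA3, mD1, mD5⟩
    · exact ⟨i6, Ne.symm nA7, Ne.symm nE3, nH1⟩
    · exact ⟨j6, Ne.symm mA7, Ne.symm mE3, mH1⟩
  · rintro ⟨hicc, hd1, hd2, hd3⟩
    rcases mem1 z hicc with h|h|h|h|h|h|h|h|h
    · exact absurd h hd1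
    · rcases BsubA (x1 - a) (Or.inl rfl) with h'|h'|h'
      · exact Or.inr (Or.inl (by linarith))
      · exact Or.inr (Or.inr (Or.inr (Or.inl (by linarith))))
      · exact Or.inr (Or.inr (Or.inr (Or.inr (Or.inr (by linarith)))))
    · exact Or.inl h
    · exact Or.inr (Or.inr (Or.inl h))
    · exact absurd h hd2
    · rcases BsubA (x4 - a) (Or.inr (Or.inl rfl)) with h'|h'|h'
      · exact Or.inr (Or.inl (by linarith))
      · exact Or.inr (Or.inr (Or.inr (Or.inl (by linarith))))
      · exact Or.inr (Or.inr (Or.inr (Or.inr (Or.inr (by linarith)))))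
    · rcases BsubA (x5 - a) (Or.inr (Or.inr rfl)) with h'|h'|h'
      · exact Or.inr (Or.inl (by linarith))
      · exact Or.inr (Or.inr (Or.inr (Or.inl (by linarith))))
      · exact Or.inr (Or.inr (Or.inr (Or.inr (Or.inr (by linarith)))))
    · exact Or.inr (Or.inr (Or.inr (Or.inr (Or.inl h))))
    · exact absurd h hd3

theorem fubuki_unique_of_no_triplet (d₁ d₂ d₃ : ℤ)
    (hD : ({d₁, d₂, d₃} : Finset ℤ) ⊆ Finset.Icc (1 : ℤ) 9)
    (hDcard : ({d₁, d₂, d₃} : Finset ℤ).card = 3)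
    (hno : ¬ ∃ (c : ℤ) (y₁ y₂ y₃ : ℤ), 0 < c ∧
        ({y₁, y₁ + c, y₂, y₂ + c, y₃, y₃ + c} : Finset ℤ)
          = Finset.Icc (1 : ℤ) 9 \ {d₁, d₂, d₃})
    (r k : Fin 3 → ℤ) :
    ∀ s s' : Fin 3 → Fin 3 → ℤ,
      IsFubukiFilling s → s 0 0 = d₁ → s 1 1 = d₂ → s 2 2 = d₃ →
      (∀ i, ∑ j, s i j = r i) → (∀ j, ∑ i, s i j = k j) →
      IsFubukiFilling s' → s' 0 0 = d₁ → s' 1 1 = d₂ → s' 2 2 = d₃ →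
      (∀ i, ∑ j, s' i j = r i) → (∀ j, ∑ i, s' i j = k j) →
      s = s' := by
  intro s s' hs hs00 hs11 hs22 hr hk hs' hs'00 hs'11 hs'22 hr' hk'
  have E : ({d₁, s 0 1, s 0 2, s 1 0, d₂, s 1 2, s 2 0, s 2 1, d₃} : Finset ℤ)
      = Finset.Icc 1 9 := by
    have := fubuki_entries hs
    rwa [hs00, hs11, hs22] at this
  have E' : ({d₁, s' 0 1, s' 0 2, s' 1 0, d₂, s' 1 2, s' 2 0, s' 2 1, d₃} : Finset ℤ)
      = Finset.Icc 1 9 := by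
    have := fubuki_entries hs'
    rwa [hs'00, hs'11, hs'22] at this
  have r0 := hr 0; have r1 := hr 1; have r2 := hr 2
  have k0 := hk 0; have k1 := hk 1; have k2 := hk 2
  have r0' := hr' 0; have r1' := hr' 1; have r2' := hr' 2
  have k0' := hk' 0; have k1' := hk' 1; have k2' := hk' 2
  rw [Fin.sum_univ_three] at r0 r1 r2 k0 k1 k2 r0' r1' r2' k0' k1' k2'
  set a : ℤ := s 0 1 - s' 0 1 with ha
  have h01 : s' 0 1 = s 0 1 - a := by omega
  have h02 : s' 0 2 = s 0 2 + a := by omega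
  have h21 : s' 2 1 = s 2 1 + a := by omega
  have h20 : s' 2 0 = s 2 0 - a := by omega
  have h10 : s' 1 0 = s 1 0 + a := by omega
  have h12 : s' 1 2 = s 1 2 - a := by omega
  rcases lt_trichotomy a 0 with hlt | heq | hgt
  · exfalso
    apply hno
    have E2 : ({d₁, s' 0 1 - -a, s' 0 2 + -a, s' 1 0 + -a, d₂, s' 1 2 - -a, s' 2 0 - -a,
        s' 2 1 + -a, d₃} : Finset ℤ) = Finset.Icc 1 9 := by
      rw [show s' 0 1 - -a = s 0 1 by omega, show s' 0 2 + -a = s 0 2 by omega,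
        show s' 1 0 + -a = s 1 0 by omega, show s' 1 2 - -a = s 1 2 by omega,
        show s' 2 0 - -a = s 2 0 by omega, show s' 2 1 + -a = s 2 1 by omega]
      exact E
    exact fubuki_key_s11 d₁ d₂ d₃ (s' 0 1) (s' 0 2) (s' 1 0) (s' 1 2) (s' 2 0) (s' 2 1) (-a)
      (by omega) E' E2
  · funext i j
    fin_cases i <;> fin_cases j <;> simp <;> omega
  · exfalso
    apply hno
    have E2 : ({d₁, s 0 1 - a, s 0 2 + a, s 1 0 + a, d₂, s 1 2 - a, s 2 0 - a,
        s 2 1 + a, d₃} : Finset ℤ) = Finset.Icc 1 9 := by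
      rw [← h01, ← h02, ← h10, ← h12, ← h20, ← h21]
      exact E'
    exact fubuki_key_s11 d₁ d₂ d₃ (s 0 1) (s 0 2) (s 1 0) (s 1 2) (s 2 0) (s 2 1) a hgt E E2
end

section
/- For any three-element set D ⊆ {1,…,9}, any row sums r : Fin 3 → ℤ and column sums k : Fin 3 → ℤ, there are at most 2 grids s : Fin 3 → Fin 3 → ℤ whose nine entries are a permutation of {1,…,9}, whose diagonal is D (in a fixed order), and whose row and column sums are r and k respectively. -/
/-- `s` solves the Fubuki problem with prescribed diagonal `(d₁,d₂,d₃)`,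
row sums `r` and column sums `k`. -/
def IsFubukiSolution (d₁ d₂ d₃ : ℤ) (r k : Fin 3 → ℤ) (s : Fin 3 → Fin 3 → ℤ) : Prop :=
  IsFubukiFilling s ∧ s 0 0 = d₁ ∧ s 1 1 = d₂ ∧ s 2 2 = d₃ ∧
    (∀ i, ∑ j, s i j = r i) ∧ (∀ j, ∑ i, s i j = k j)

/-- The sum of squares of the nine entries of a Fubuki filling is `1²+⋯+9² = 285`. -/
lemma sumsq_eq (s : Fin 3 → Fin 3 → ℤ) (h : IsFubukiFilling s) :
    ∑ p : Fin 3 × Fin 3, (s p.1 p.2)^2 = 285 := by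
  have hcard : (Finset.univ.image fun p : Fin 3 × Fin 3 => s p.1 p.2).card
      = (Finset.univ : Finset (Fin 3 × Fin 3)).card := by
    rw [h]; decide
  have hinj : Set.InjOn (fun p : Fin 3 × Fin 3 => s p.1 p.2)
      (Finset.univ : Finset (Fin 3 × Fin 3)) :=
    Finset.card_image_iff.mp hcard
  have h285 : ∑ x ∈ Finset.Icc (1:ℤ) 9, x^2 = 285 := by decide
  rw [← h285, ← h, Finset.sum_image (fun x hx y hy hxy => hinj hx hy hxy)]

/-- Two Fubuki solutions with the same data differ by adding `±t` to the
off-diagonal entries in a fixed pattern, and `t` satisfies a quadratic. -/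
lemma fubuki_key_s12 (d₁ d₂ d₃ : ℤ) (r k : Fin 3 → ℤ) (s s' : Fin 3 → Fin 3 → ℤ)
    (h : IsFubukiSolution d₁ d₂ d₃ r k s) (h' : IsFubukiSolution d₁ d₂ d₃ r k s') :
    ∃ t : ℤ, s' 0 0 = s 0 0 ∧ s' 1 1 = s 1 1 ∧ s' 2 2 = s 2 2 ∧
      s' 0 1 = s 0 1 + t ∧ s' 0 2 = s 0 2 - t ∧ s' 1 0 = s 1 0 - t ∧
      s' 1 2 = s 1 2 + t ∧ s' 2 0 = s 2 0 + t ∧ s' 2 1 = s 2 1 - t ∧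
      t * (6*t + 2*(s 0 1 - s 0 2 - s 1 0 + s 1 2 + s 2 0 - s 2 1)) = 0 := by
  obtain ⟨hf, hd1, hd2, hd3, hr, hc⟩ := h
  obtain ⟨hf', hd1', hd2', hd3', hr', hc'⟩ := h'
  have r0 := hr 0; have r1 := hr 1; have r2 := hr 2
  have c0 := hc 0; have c1 := hc 1; have c2 := hc 2
  have r0' := hr' 0; have r1' := hr' 1; have r2' := hr' 2
  have c0' := hc' 0; have c1' := hc' 1; have c2' := hc' 2
  simp only [Fin.sum_univ_three] at r0 r1 r2 c0 c1 c2 r0' r1' r2' c0' c1' c2'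
  refine ⟨s' 0 1 - s 0 1, by rw [hd1', hd1], by rw [hd2', hd2], by rw [hd3', hd3],
    by ring, by linarith, by linarith, by linarith, by linarith, by linarith, ?_⟩
  have H := sumsq_eq s hf
  have H' := sumsq_eq s' hf'
  simp only [Fintype.sum_prod_type, Fin.sum_univ_three] at H H'
  have e00 : s' 0 0 = s 0 0 := by rw [hd1', hd1]
  have e11 : s' 1 1 = s 1 1 := by rw [hd2', hd2]
  have e22 : s' 2 2 = s 2 2 := by rw [hd3', hd3]
  have e02 : s' 0 2 = s 0 2 - (s' 0 1 - s 0 1) := by linarith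
  have e10 : s' 1 0 = s 1 0 - (s' 0 1 - s 0 1) := by linarith
  have e12 : s' 1 2 = s 1 2 + (s' 0 1 - s 0 1) := by linarith
  have e20 : s' 2 0 = s 2 0 + (s' 0 1 - s 0 1) := by linarith
  have e21 : s' 2 1 = s 2 1 - (s' 0 1 - s 0 1) := by linarith
  rw [e00, e11, e22, e02, e10, e12, e20, e21] at H'
  linear_combination H' - H

theorem fubuki_at_most_two (d₁ d₂ d₃ : ℤ)
    (hD : ({d₁, d₂, d₃} : Finset ℤ) ⊆ Finset.Icc (1 : ℤ) 9)
    (hDcard : ({d₁, d₂, d₃} : Finset ℤ).card = 3)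
    (r k : Fin 3 → ℤ) :
    ∀ s s' s'' : Fin 3 → Fin 3 → ℤ,
      IsFubukiSolution d₁ d₂ d₃ r k s →
      IsFubukiSolution d₁ d₂ d₃ r k s' →
      IsFubukiSolution d₁ d₂ d₃ r k s'' →
      s = s' ∨ s = s'' ∨ s' = s'' := by
  intro s s' s'' h h' h''
  obtain ⟨t, a00, a11, a22, a01, a02, a10, a12, a20, a21, ht⟩ :=
    fubuki_key_s12 d₁ d₂ d₃ r k s s' h h'
  obtain ⟨u, b00, b11, b22, b01, b02, b10, b12, b20, b21, hu⟩ :=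
    fubuki_key_s12 d₁ d₂ d₃ r k s s'' h h''
  rcases mul_eq_zero.mp ht with h0 | h1
  · left
    subst h0
    funext i j
    fin_cases i <;> fin_cases j <;> simp_all
  · rcases mul_eq_zero.mp hu with h0 | h1'
    · right; left
      subst h0
      funext i j
      fin_cases i <;> fin_cases j <;> simp_all
    · right; right
      have htu : t = u := by linarith
      subst htu
      funext i j
      fin_cases i <;> fin_cases j <;> simp_all
end

section
/- Suppose s and s' are two distinct grids solving the same Fubuki problem with the same prescribed diagonal (same diagonal entries, same row sums, same column sums, both with entries a permutation of {1,…,9}). Then there exists a nonzero integer a such that s' 0 1 = s 0 1 + a, s' 0 2 = s 0 2 - a, s' 1 0 = s 1 0 - a, s' 1 2 = s 1 2 + a, s' 2 0 = s 2 0 + a, s' 2 1 = s 2 1 - a. -/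
theorem fubuki_second_solution_form (s s' : Fin 3 → Fin 3 → ℤ)
    (hs : IsFubukiFilling s) (hs' : IsFubukiFilling s')
    (hdiag : ∀ i, s' i i = s i i)
    (hrow : ∀ i, ∑ j, s' i j = ∑ j, s i j)
    (hcol : ∀ j, ∑ i, s' i j = ∑ i, s i j)
    (hne : s ≠ s') :
    ∃ a : ℤ, a ≠ 0 ∧
      s' 0 1 = s 0 1 + a ∧ s' 0 2 = s 0 2 - a ∧
      s' 1 0 = s 1 0 - a ∧ s' 1 2 = s 1 2 + a ∧
      s' 2 0 = s 2 0 + a ∧ s' 2 1 = s 2 1 - a := by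
  have hr0 := hrow 0; have hr1 := hrow 1; have hr2 := hrow 2
  have hc0 := hcol 0; have hc1 := hcol 1; have hc2 := hcol 2
  simp only [Fin.sum_univ_three] at hr0 hr1 hr2 hc0 hc1 hc2
  have hd0 := hdiag 0; have hd1 := hdiag 1; have hd2 := hdiag 2
  refine ⟨s' 0 1 - s 0 1, ?_, by ring, by omega, by omega, by omega, by omega, by omega⟩
  intro h
  apply hne
  funext i j
  fin_cases i <;> fin_cases j <;> simp only [Fin.zero_eta, Fin.mk_one, Fin.reduceFinMk] <;> omega
end

section
/- There are exactly 35 three-element subsets D of {1,…,9} with the property that no positive integer c and integers y₁, y₂, y₃ satisfy {y₁, y₁+c, y₂, y₂+c, y₃, y₃+c} = {1,…,9} \ D. -/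
/-!
If `S = {y₁, y₁ + c, y₂, y₂ + c, y₃, y₃ + c}` with `c > 0`, the least element of `S` cannot be of
the form `yᵢ + c`, so after relabelling `y₁ = min S`; then `c = x - min S` for some `x ∈ S` and
`y₂, y₃ ∈ S`. This turns the unbounded existential into a search over elements of the complement
of `D`, which the kernel carries out for all 84 three-element subsets `D` of `{1, …, 9}`.
-/

lemma Finset.insert_six_rotate {β : Type*} [DecidableEq β] (a b c d e f : β) :
    ({a, b, c, d, e, f} : Finset β) = {c, d, e, f, a, b} := by
  ext
  simp only [Finset.mem_insert, Finset.mem_singleton]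
  tauto

section PairsFromMin

variable {α : Type*} [AddCommGroup α] [LinearOrder α] [IsOrderedAddMonoid α]

def PairsFromMin (S : Finset α) : Prop :=
  ∃ m ∈ S, (∀ z ∈ S, m ≤ z) ∧ ∃ x ∈ S, m < x ∧ ∃ y₂ ∈ S, ∃ y₃ ∈ S,
    ({m, x, y₂, y₂ + (x - m), y₃, y₃ + (x - m)} : Finset α) = S

instance (S : Finset α) : Decidable (PairsFromMin S) :=
  inferInstanceAs (Decidable (∃ m ∈ S, _))

lemma pairsFromMin_of_forall_le {c y₁ y₂ y₃ : α} {S : Finset α} (hc : 0 < c)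
    (hS : {y₁, y₁ + c, y₂, y₂ + c, y₃, y₃ + c} = S) (hle : ∀ z ∈ S, y₁ ≤ z) :
    PairsFromMin S := by
  subst hS
  exact ⟨y₁, by simp, hle, y₁ + c, by simp, lt_add_of_pos_right _ hc, y₂, by simp, y₃, by simp,
    by rw [add_sub_cancel_left]⟩

lemma eq_or_eq_or_eq_of_forall_le {c m y₁ y₂ y₃ : α} {S : Finset α} (hc : 0 < c)
    (hS : {y₁, y₁ + c, y₂, y₂ + c, y₃, y₃ + c} = S) (hm : m ∈ S) (hle : ∀ z ∈ S, m ≤ z) :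
    m = y₁ ∨ m = y₂ ∨ m = y₃ := by
  subst hS
  have h₁ := hle y₁ (by simp)
  have h₂ := hle y₂ (by simp)
  have h₃ := hle y₃ (by simp)
  simp only [Finset.mem_insert, Finset.mem_singleton] at hm
  rcases hm with h | h | h | h | h | h <;> subst h <;>
    simp_all [add_le_iff_nonpos_right, not_le.2 hc]

theorem exists_pairs_eq_iff_pairsFromMin (S : Finset α) :
    (∃ c y₁ y₂ y₃ : α, 0 < c ∧ ({y₁, y₁ + c, y₂, y₂ + c, y₃, y₃ + c} : Finset α) = S) ↔
      PairsFromMin S := by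
  constructor
  · rintro ⟨c, y₁, y₂, y₃, hc, hS⟩
    have hne : S.Nonempty := ⟨y₁, by simp [← hS]⟩
    have hle : ∀ z ∈ S, S.min' hne ≤ z := fun z => S.min'_le z
    rcases eq_or_eq_or_eq_of_forall_le hc hS (S.min'_mem hne) hle with h | h | h <;>
      rw [h] at hle
    · exact pairsFromMin_of_forall_le hc hS hle
    · exact pairsFromMin_of_forall_le hc ((Finset.insert_six_rotate ..).symm.trans hS) hle
    · exact pairsFromMin_of_forall_le hc
        ((Finset.insert_six_rotate ..).symm.trans ((Finset.insert_six_rotate ..).symm.trans hS)) hle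
  · rintro ⟨m, -, -, x, -, hmx, y₂, -, y₃, -, h⟩
    exact ⟨x - m, m, y₂, y₃, sub_pos.2 hmx, by rwa [add_sub_cancel]⟩

end PairsFromMin

theorem card_filter_not_pairsFromMin_compl :
    (((Finset.Icc (1 : ℤ) 9).powersetCard 3).filter
      (fun D => ¬ PairsFromMin (Finset.Icc 1 9 \ D))).card = 35 := by
  decide +kernel

open scoped Classical

theorem fubuki_count_no_c :
    (((Finset.Icc (1 : ℤ) 9).powersetCard 3).filter
      (fun D => ¬ ∃ (c : ℤ) (y₁ y₂ y₃ : ℤ), 0 < c ∧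
          ({y₁, y₁ + c, y₂, y₂ + c, y₃, y₃ + c} : Finset ℤ)
            = Finset.Icc (1 : ℤ) 9 \ D)).card = 35 := by
  rw [Finset.filter_congr fun D _ => not_congr (exists_pairs_eq_iff_pairsFromMin _)]
  convert card_filter_not_pairsFromMin_compl
end

section
/- There are exactly 4 three-element subsets D of {1,…,9} for which there exist two distinct positive integers c₁ ≠ c₂ each admitting integers y₁,y₂,y₃ with {y₁, y₁+cᵢ, y₂, y₂+cᵢ, y₃, y₃+cᵢ} = {1,…,9} \ D; they are D = {1,2,3}, {1,2,9}, {1,8,9}, {7,8,9}. -/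
open scoped Classical


def Pinned (c : ℤ) (S : Finset ℤ) : Prop :=
  ∃ y₁ ∈ S, (∀ x ∈ S, y₁ ≤ x) ∧
  ∃ y₂ ∈ S, (y₂ ≠ y₁ ∧ y₂ ≠ y₁ + c ∧ ∀ x ∈ S, x ≠ y₁ → x ≠ y₁ + c → y₂ ≤ x) ∧
  ∃ y₃ ∈ S, ((y₃ ≠ y₁ ∧ y₃ ≠ y₁ + c ∧ y₃ ≠ y₂ ∧ y₃ ≠ y₂ + c) ∧
      ∀ x ∈ S, x ≠ y₁ → x ≠ y₁ + c → x ≠ y₂ → x ≠ y₂ + c → y₃ ≤ x) ∧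
  ({y₁, y₁ + c, y₂, y₂ + c, y₃, y₃ + c} : Finset ℤ) = S

instance Pinned.dec : ∀ c S, Decidable (Pinned c S) := fun c S => by
  unfold Pinned; infer_instance

private lemma card_le_2 (a b : ℤ) : ({a, b} : Finset ℤ).card ≤ 2 := by
  have h1 := Finset.card_insert_le a ({b} : Finset ℤ)
  simp at h1 ⊢; omega

private lemma card_le_4 (a b c d : ℤ) : ({a, b, c, d} : Finset ℤ).card ≤ 4 := by
  have h1 := Finset.card_insert_le a ({b, c, d} : Finset ℤ)
  have h2 := Finset.card_insert_le b ({c, d} : Finset ℤ)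
  have h3 := Finset.card_insert_le c ({d} : Finset ℤ)
  simp at h1 h2 h3 ⊢; omega

private lemma card_le_5 (a b c d e : ℤ) : ({a, b, c, d, e} : Finset ℤ).card ≤ 5 := by
  have h1 := Finset.card_insert_le a ({b, c, d, e} : Finset ℤ)
  have h2 := card_le_4 b c d e
  omega

private lemma perm12 (c y₁ y₂ y₃ : ℤ) :
    ({y₂, y₂ + c, y₁, y₁ + c, y₃, y₃ + c} : Finset ℤ) = {y₁, y₁ + c, y₂, y₂ + c, y₃, y₃ + c} := by
  ext x; simp; tauto

private lemma perm13 (c y₁ y₂ y₃ : ℤ) :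
    ({y₃, y₃ + c, y₂, y₂ + c, y₁, y₁ + c} : Finset ℤ) = {y₁, y₁ + c, y₂, y₂ + c, y₃, y₃ + c} := by
  ext x; simp; tauto

private lemma perm23 (c y₁ y₂ y₃ : ℤ) :
    ({y₁, y₁ + c, y₃, y₃ + c, y₂, y₂ + c} : Finset ℤ) = {y₁, y₁ + c, y₂, y₂ + c, y₃, y₃ + c} := by
  ext x; simp; tauto

private lemma pinned_of_exists {c : ℤ} (hc : 0 < c) {S : Finset ℤ} (hcard : S.card = 6)
    (h : ∃ y₁ y₂ y₃ : ℤ, ({y₁, y₁ + c, y₂, y₂ + c, y₃, y₃ + c} : Finset ℤ) = S) :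
    Pinned c S := by
  -- Phase 1: make y₁ the minimum of S
  have hA : ∃ y₁ y₂ y₃ : ℤ, (y₁ ∈ S ∧ ∀ x ∈ S, y₁ ≤ x) ∧
      ({y₁, y₁ + c, y₂, y₂ + c, y₃, y₃ + c} : Finset ℤ) = S := by
    obtain ⟨y₁, y₂, y₃, e⟩ := h
    have hy₁ : y₁ ∈ S := by rw [← e]; simp
    have hy₂ : y₂ ∈ S := by rw [← e]; simp
    have hy₃ : y₃ ∈ S := by rw [← e]; simp
    have hne : S.Nonempty := ⟨y₁, hy₁⟩
    have hmS : S.min' hne ∈ S := S.min'_mem hne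
    have hmle : ∀ x ∈ S, S.min' hne ≤ x := fun x hx => S.min'_le x hx
    have hmem : S.min' hne ∈ ({y₁, y₁ + c, y₂, y₂ + c, y₃, y₃ + c} : Finset ℤ) := by
      rw [e]; exact hmS
    simp only [Finset.mem_insert, Finset.mem_singleton] at hmem
    rcases hmem with h1 | h1 | h1 | h1 | h1 | h1
    · exact ⟨y₁, y₂, y₃, ⟨hy₁, fun x hx => by rw [← h1]; exact hmle x hx⟩, e⟩
    · have := hmle y₁ hy₁; omega
    · exact ⟨y₂, y₁, y₃, ⟨hy₂, fun x hx => by rw [← h1]; exact hmle x hx⟩,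
        (perm12 c y₁ y₂ y₃).trans e⟩
    · have := hmle y₂ hy₂; omega
    · exact ⟨y₃, y₂, y₁, ⟨hy₃, fun x hx => by rw [← h1]; exact hmle x hx⟩,
        (perm13 c y₁ y₂ y₃).trans e⟩
    · have := hmle y₃ hy₃; omega
  clear h
  -- Phase 2: make y₂ the minimum of S minus the first pair
  obtain ⟨y₁, y₂, y₃, hmin1, e⟩ := hA
  have hy₂ : y₂ ∈ S := by rw [← e]; simp
  have hy₃ : y₃ ∈ S := by rw [← e]; simp
  have hB : ∃ y₂' y₃' : ℤ,
      (y₂' ∈ S ∧ y₂' ≠ y₁ ∧ y₂' ≠ y₁ + c ∧ ∀ x ∈ S, x ≠ y₁ → x ≠ y₁ + c → y₂' ≤ x) ∧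
      ({y₁, y₁ + c, y₂', y₂' + c, y₃', y₃' + c} : Finset ℤ) = S := by
    have hne' : (S.filter (fun x => x ≠ y₁ ∧ x ≠ y₁ + c)).Nonempty := by
      rw [Finset.filter_nonempty_iff]
      by_contra hcon
      push_neg at hcon
      have hsub : S ⊆ ({y₁, y₁ + c} : Finset ℤ) := by
        intro x hx
        have := hcon x hx
        simp only [Finset.mem_insert, Finset.mem_singleton]
        by_cases hx1 : x = y₁
        · exact Or.inl hx1
        · exact Or.inr (this hx1)
      have := Finset.card_le_card hsub
      have := card_le_2 y₁ (y₁ + c)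
      omega
    set S' := S.filter (fun x => x ≠ y₁ ∧ x ≠ y₁ + c) with hS'
    have hmS' := Finset.mem_filter.1 (S'.min'_mem hne')
    have hmle : ∀ x ∈ S, x ≠ y₁ → x ≠ y₁ + c → S'.min' hne' ≤ x := fun x hx h1 h2 =>
      S'.min'_le x (Finset.mem_filter.2 ⟨hx, h1, h2⟩)
    have hmem : S'.min' hne' ∈ ({y₁, y₁ + c, y₂, y₂ + c, y₃, y₃ + c} : Finset ℤ) := by
      rw [e]; exact hmS'.1
    simp only [Finset.mem_insert, Finset.mem_singleton] at hmem
    obtain ⟨hmS, hm1, hm2⟩ := hmS'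
    rcases hmem with h1 | h1 | h1 | h1 | h1 | h1
    · exact absurd h1 hm1
    · exact absurd h1 hm2
    · exact ⟨y₂, y₃, ⟨hy₂, h1 ▸ hm1, h1 ▸ hm2,
        fun x hx a b => by rw [← h1]; exact hmle x hx a b⟩, e⟩
    · -- min = y₂ + c : contradiction via cardinality
      exfalso
      have hlt : y₂ < S'.min' hne' := by omega
      have hy₂nS' : y₂ = y₁ ∨ y₂ = y₁ + c := by
        by_contra hcon
        push_neg at hcon
        have := hmle y₂ hy₂ hcon.1 hcon.2
        omega
      rcases hy₂nS' with h2 | h2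
      · have hsub : S ⊆ ({y₁, y₁ + c, y₃, y₃ + c} : Finset ℤ) := by
          intro x hx
          rw [← e] at hx
          simp only [Finset.mem_insert, Finset.mem_singleton] at hx ⊢
          omega
        have := Finset.card_le_card hsub
        have := card_le_4 y₁ (y₁ + c) y₃ (y₃ + c)
        omega
      · have hsub : S ⊆ ({y₁, y₁ + c, y₁ + c + c, y₃, y₃ + c} : Finset ℤ) := by
          intro x hx
          rw [← e] at hx
          simp only [Finset.mem_insert, Finset.mem_singleton] at hx ⊢
          omega
        have := Finset.card_le_card hsub
        have := card_le_5 y₁ (y₁ + c) (y₁ + c + c) y₃ (y₃ + c)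
        omega
    · exact ⟨y₃, y₂, ⟨hy₃, h1 ▸ hm1, h1 ▸ hm2,
        fun x hx a b => by rw [← h1]; exact hmle x hx a b⟩, (perm23 c y₁ y₂ y₃).trans e⟩
    · exfalso
      have hlt : y₃ < S'.min' hne' := by omega
      have hy₃nS' : y₃ = y₁ ∨ y₃ = y₁ + c := by
        by_contra hcon
        push_neg at hcon
        have := hmle y₃ hy₃ hcon.1 hcon.2
        omega
      rcases hy₃nS' with h2 | h2
      · have hsub : S ⊆ ({y₁, y₁ + c, y₂, y₂ + c} : Finset ℤ) := by
          intro x hx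
          rw [← e] at hx
          simp only [Finset.mem_insert, Finset.mem_singleton] at hx ⊢
          omega
        have := Finset.card_le_card hsub
        have := card_le_4 y₁ (y₁ + c) y₂ (y₂ + c)
        omega
      · have hsub : S ⊆ ({y₁, y₁ + c, y₁ + c + c, y₂, y₂ + c} : Finset ℤ) := by
          intro x hx
          rw [← e] at hx
          simp only [Finset.mem_insert, Finset.mem_singleton] at hx ⊢
          omega
        have := Finset.card_le_card hsub
        have := card_le_5 y₁ (y₁ + c) (y₁ + c + c) y₂ (y₂ + c)
        omega
  clear e hy₂ hy₃
  -- Phase 3: make y₃ the minimum of what remains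
  obtain ⟨y₂, y₃, hmin2, e⟩ := hB
  have hy₃ : y₃ ∈ S := by rw [← e]; simp
  obtain ⟨hy₂S, h21, h22, h2min⟩ := hmin2
  have hne'' : (S.filter (fun x => x ≠ y₁ ∧ x ≠ y₁ + c ∧ x ≠ y₂ ∧ x ≠ y₂ + c)).Nonempty := by
    rw [Finset.filter_nonempty_iff]
    by_contra hcon
    push_neg at hcon
    have hsub : S ⊆ ({y₁, y₁ + c, y₂, y₂ + c} : Finset ℤ) := by
      intro x hx
      have h4 := hcon x hx
      simp only [Finset.mem_insert, Finset.mem_singleton]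
      by_cases a1 : x = y₁
      · tauto
      by_cases a2 : x = y₁ + c
      · tauto
      by_cases a3 : x = y₂
      · tauto
      · exact Or.inr (Or.inr (Or.inr (h4 a1 a2 a3)))
    have := Finset.card_le_card hsub
    have := card_le_4 y₁ (y₁ + c) y₂ (y₂ + c)
    omega
  set S'' := S.filter (fun x => x ≠ y₁ ∧ x ≠ y₁ + c ∧ x ≠ y₂ ∧ x ≠ y₂ + c) with hS''
  have hmS'' := Finset.mem_filter.1 (S''.min'_mem hne'')
  have hmle : ∀ x ∈ S, x ≠ y₁ → x ≠ y₁ + c → x ≠ y₂ → x ≠ y₂ + c → S''.min' hne'' ≤ x :=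
    fun x hx a b d f => S''.min'_le x (Finset.mem_filter.2 ⟨hx, a, b, d, f⟩)
  have hmem : S''.min' hne'' ∈ ({y₁, y₁ + c, y₂, y₂ + c, y₃, y₃ + c} : Finset ℤ) := by
    rw [e]; exact hmS''.1
  simp only [Finset.mem_insert, Finset.mem_singleton] at hmem
  obtain ⟨hmS, hm1, hm2, hm3, hm4⟩ := hmS''
  rcases hmem with h1 | h1 | h1 | h1 | h1 | h1
  · exact absurd h1 hm1
  · exact absurd h1 hm2
  · exact absurd h1 hm3
  · exact absurd h1 hm4
  · exact ⟨y₁, hmin1.1, hmin1.2, y₂, hy₂S, ⟨h21, h22, h2min⟩,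
      y₃, hy₃, ⟨⟨h1 ▸ hm1, h1 ▸ hm2, h1 ▸ hm3, h1 ▸ hm4⟩,
        fun x hx a b d f => by rw [← h1]; exact hmle x hx a b d f⟩, e⟩
  · exfalso
    have hlt : y₃ < S''.min' hne'' := by omega
    have hy₃n : y₃ = y₁ ∨ y₃ = y₁ + c ∨ y₃ = y₂ ∨ y₃ = y₂ + c := by
      by_contra hcon
      push_neg at hcon
      have := hmle y₃ hy₃ hcon.1 hcon.2.1 hcon.2.2.1 hcon.2.2.2
      omega
    have hsub : S ⊆ ({y₁, y₁ + c, y₂, y₂ + c, y₃ + c} : Finset ℤ) := by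
      intro x hx
      rw [← e] at hx
      simp only [Finset.mem_insert, Finset.mem_singleton] at hx ⊢
      omega
    have := Finset.card_le_card hsub
    have := card_le_5 y₁ (y₁ + c) y₂ (y₂ + c) (y₃ + c)
    omega

private lemma c_mem {c : ℤ} (hc : 0 < c) {D : Finset ℤ}
    (h : ∃ y₁ y₂ y₃ : ℤ,
      ({y₁, y₁ + c, y₂, y₂ + c, y₃, y₃ + c} : Finset ℤ) = Finset.Icc (1 : ℤ) 9 \ D) :
    c ∈ Finset.Icc (1 : ℤ) 8 := by
  obtain ⟨y₁, y₂, y₃, e⟩ := h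
  have h1 : y₁ ∈ Finset.Icc (1 : ℤ) 9 := (Finset.mem_sdiff.1 (by rw [← e]; simp)).1
  have h2 : y₁ + c ∈ Finset.Icc (1 : ℤ) 9 := (Finset.mem_sdiff.1 (by rw [← e]; simp)).1
  rw [Finset.mem_Icc] at h1 h2 ⊢
  omega

set_option maxHeartbeats 4000000 in
theorem fubuki_count_two_c :
    ((Finset.Icc (1 : ℤ) 9).powersetCard 3).filter
      (fun D => ∃ c₁ c₂ : ℤ, 0 < c₁ ∧ 0 < c₂ ∧ c₁ ≠ c₂ ∧
          (∃ y₁ y₂ y₃ : ℤ,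
            ({y₁, y₁ + c₁, y₂, y₂ + c₁, y₃, y₃ + c₁} : Finset ℤ)
              = Finset.Icc (1 : ℤ) 9 \ D) ∧
          (∃ y₁ y₂ y₃ : ℤ,
            ({y₁, y₁ + c₂, y₂, y₂ + c₂, y₃, y₃ + c₂} : Finset ℤ)
              = Finset.Icc (1 : ℤ) 9 \ D))
      = ({{1, 2, 3}, {1, 2, 9}, {1, 8, 9}, {7, 8, 9}} : Finset (Finset ℤ)) := by
  have key : ∀ D ∈ (Finset.Icc (1 : ℤ) 9).powersetCard 3,
      ((∃ c₁ c₂ : ℤ, 0 < c₁ ∧ 0 < c₂ ∧ c₁ ≠ c₂ ∧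
          (∃ y₁ y₂ y₃ : ℤ,
            ({y₁, y₁ + c₁, y₂, y₂ + c₁, y₃, y₃ + c₁} : Finset ℤ)
              = Finset.Icc (1 : ℤ) 9 \ D) ∧
          (∃ y₁ y₂ y₃ : ℤ,
            ({y₁, y₁ + c₂, y₂, y₂ + c₂, y₃, y₃ + c₂} : Finset ℤ)
              = Finset.Icc (1 : ℤ) 9 \ D)) ↔
       (∃ c₁ ∈ Finset.Icc (1 : ℤ) 8, Pinned c₁ (Finset.Icc (1 : ℤ) 9 \ D) ∧
        ∃ c₂ ∈ Finset.Icc (1 : ℤ) 8, c₁ ≠ c₂ ∧ Pinned c₂ (Finset.Icc (1 : ℤ) 9 \ D))) := by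
    intro D hD
    rw [Finset.mem_powersetCard] at hD
    have hScard : (Finset.Icc (1 : ℤ) 9 \ D).card = 6 := by
      rw [Finset.card_sdiff_of_subset hD.1]
      have h9 : (Finset.Icc (1 : ℤ) 9).card = 9 := rfl
      omega
    constructor
    · rintro ⟨c₁, c₂, hc₁, hc₂, hne, h₁, h₂⟩
      exact ⟨c₁, c_mem hc₁ h₁, pinned_of_exists hc₁ hScard h₁,
             c₂, c_mem hc₂ h₂, hne, pinned_of_exists hc₂ hScard h₂⟩
    · rintro ⟨c₁, m₁, p₁, c₂, m₂, hne, p₂⟩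
      rw [Finset.mem_Icc] at m₁ m₂
      obtain ⟨y₁, -, -, y₂, -, -, y₃, -, -, e₁⟩ := p₁
      obtain ⟨z₁, -, -, z₂, -, -, z₃, -, -, e₂⟩ := p₂
      exact ⟨c₁, c₂, by omega, by omega, hne, ⟨y₁, y₂, y₃, e₁⟩, ⟨z₁, z₂, z₃, e₂⟩⟩
  rw [Finset.filter_congr key]
  decide
end
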